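/- The function u₂(x) = (e^{2x}+1)/(e^{x/2}√(e^{2x}-1)) is not square integrable on (0,1) and not square integrable on (1,∞): ∫₀¹ u₂(x)² dx = ∞ and ∫₁^∞ u₂(x)² dx = ∞. -/
import Mathlib

open Real Filter MeasureTheory

noncomputable def u₂ (x : ℝ) : ℝ :=
  (Real.exp (2*x) + 1) / (Real.exp (x/2) * Real.sqrt (Real.exp (2*x) - 1))

lemma u₂_sq {x : ℝ} (hx : 0 < x) :
    (u₂ x)^2 = (Real.exp (2*x) + 1)^2 / (Real.exp x * (Real.exp (2*x) - 1)) := by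
  have h1 : (0:ℝ) ≤ Real.exp (2*x) - 1 := by
    have := Real.one_le_exp (by linarith : (0:ℝ) ≤ 2*x); linarith
  rw [u₂, div_pow, mul_pow, Real.sq_sqrt h1]
  congr 2
  rw [sq, ← Real.exp_add]
  ring_nf

lemma lint_inv_top : ∫⁻ x in Set.Ioo (0:ℝ) 1, ENNReal.ofReal (x⁻¹) = ⊤ := by
  by_contra h
  have hm : AEStronglyMeasurable (fun x : ℝ => x⁻¹)
      (volume.restrict (Set.Ioo (0:ℝ) 1)) := measurable_inv.aestronglyMeasurable
  have hnn : 0 ≤ᵐ[volume.restrict (Set.Ioo (0:ℝ) 1)] fun x : ℝ => x⁻¹ := by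
    filter_upwards [ae_restrict_mem measurableSet_Ioo] with x hx
    exact inv_nonneg.mpr hx.1.le
  have hint : IntegrableOn (fun x : ℝ => x⁻¹) (Set.Ioo (0:ℝ) 1) :=
    (lintegral_ofReal_ne_top_iff_integrable hm hnn).mp h
  have : IntegrableOn (fun x : ℝ => x ^ (-1 : ℝ)) (Set.Ioo (0:ℝ) 1) := by
    apply hint.congr_fun _ measurableSet_Ioo
    intro x hx
    show x⁻¹ = x ^ (-1:ℝ)
    rw [Real.rpow_neg_one]
  rw [intervalIntegral.integrableOn_Ioo_rpow_iff one_pos] at this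
  linarith

theorem stmt_8 :
    (∫⁻ x in Set.Ioo (0:ℝ) 1, ENNReal.ofReal ((u₂ x)^2) = ⊤) ∧
    (∫⁻ x in Set.Ioi (1:ℝ), ENNReal.ofReal ((u₂ x)^2) = ⊤) := by
  constructor
  · -- bound below by (2/e³) * x⁻¹
    have key : ∀ x ∈ Set.Ioo (0:ℝ) 1, (2 / Real.exp 3) * x⁻¹ ≤ (u₂ x)^2 := by
      intro x hx
      obtain ⟨hx0, hx1⟩ := hx
      rw [u₂_sq hx0]
      have he1 : Real.exp x ≤ Real.exp 1 := Real.exp_le_exp.mpr hx1.le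
      have he2 : Real.exp (2*x) ≤ Real.exp 2 := Real.exp_le_exp.mpr (by linarith)
      have hd : Real.exp (2*x) - 1 ≤ 2*x * Real.exp (2*x) := by
        have h := Real.add_one_le_exp (-(2*x))
        have hp := Real.exp_pos (2*x)
        have hid : Real.exp (-(2*x)) * Real.exp (2*x) = 1 := by
          rw [← Real.exp_add]; simp
        nlinarith
      have hdpos : 0 < Real.exp x * (Real.exp (2*x) - 1) := by
        have h := Real.exp_lt_exp.mpr (by linarith : (0:ℝ) < 2*x)
        rw [Real.exp_zero] at h
        exact mul_pos (Real.exp_pos x) (by linarith)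
      rw [le_div_iff₀ hdpos]
      · have hone : (1:ℝ) ≤ Real.exp (2*x) := Real.one_le_exp (by linarith)
        have hnum : (4:ℝ) ≤ (Real.exp (2*x) + 1)^2 := by nlinarith
        have hden : Real.exp x * (Real.exp (2*x) - 1) ≤ Real.exp 3 * (2 * x) := by
          calc Real.exp x * (Real.exp (2*x) - 1)
              ≤ Real.exp 1 * (Real.exp (2*x) - 1) :=
                mul_le_mul_of_nonneg_right he1 (by linarith)
            _ ≤ Real.exp 1 * (2*x*Real.exp (2*x)) :=
                mul_le_mul_of_nonneg_left hd (Real.exp_pos 1).le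
            _ ≤ Real.exp 1 * (2*x*Real.exp 2) := by
                have h2 : 2*x*Real.exp (2*x) ≤ 2*x*Real.exp 2 :=
                  mul_le_mul_of_nonneg_left he2 (by linarith)
                exact mul_le_mul_of_nonneg_left h2 (Real.exp_pos 1).le
            _ = Real.exp 3 * (2*x) := by
                rw [show (3:ℝ) = 1 + 2 by norm_num, Real.exp_add]; ring
        have hx0' : (0:ℝ) < x⁻¹ := inv_pos.mpr hx0
        have he3 : (0:ℝ) < Real.exp 3 := Real.exp_pos 3
        calc 2 / Real.exp 3 * x⁻¹ * (Real.exp x * (Real.exp (2*x) - 1))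
            ≤ 2 / Real.exp 3 * x⁻¹ * (Real.exp 3 * (2*x)) := by
              apply mul_le_mul_of_nonneg_left hden (by positivity)
          _ = 4 * (x⁻¹ * x) := by field_simp; ring
          _ = 4 := by rw [inv_mul_cancel₀ hx0.ne']; ring
          _ ≤ (Real.exp (2*x) + 1)^2 := hnum
    have hmono : ∫⁻ x in Set.Ioo (0:ℝ) 1, ENNReal.ofReal ((2 / Real.exp 3) * x⁻¹)
        ≤ ∫⁻ x in Set.Ioo (0:ℝ) 1, ENNReal.ofReal ((u₂ x)^2) := by
      apply lintegral_mono_ae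
      filter_upwards [ae_restrict_mem measurableSet_Ioo] with x hx
      exact ENNReal.ofReal_le_ofReal (key x hx)
    have hlhs : ∫⁻ x in Set.Ioo (0:ℝ) 1, ENNReal.ofReal ((2 / Real.exp 3) * x⁻¹) = ⊤ := by
      have hc : (0:ℝ) ≤ 2 / Real.exp 3 := by positivity
      calc ∫⁻ x in Set.Ioo (0:ℝ) 1, ENNReal.ofReal ((2 / Real.exp 3) * x⁻¹)
          = ∫⁻ x in Set.Ioo (0:ℝ) 1,
              ENNReal.ofReal (2 / Real.exp 3) * ENNReal.ofReal (x⁻¹) := by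
            simp_rw [ENNReal.ofReal_mul hc]
        _ = ENNReal.ofReal (2 / Real.exp 3) * ∫⁻ x in Set.Ioo (0:ℝ) 1, ENNReal.ofReal (x⁻¹) :=
            lintegral_const_mul' _ _ ENNReal.ofReal_ne_top
        _ = ⊤ := by
            rw [lint_inv_top, ENNReal.mul_top]
            simp only [ne_eq, ENNReal.ofReal_eq_zero, not_le]
            positivity
    exact top_le_iff.mp (hlhs ▸ hmono)
  · -- bound below by 1
    have key : ∀ x ∈ Set.Ioi (1:ℝ), (1:ℝ) ≤ (u₂ x)^2 := by
      intro x hx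
      have hx0 : (0:ℝ) < x := lt_trans one_pos hx
      rw [u₂_sq hx0]
      have hdpos : 0 < Real.exp x * (Real.exp (2*x) - 1) := by
        have h := Real.exp_lt_exp.mpr (by linarith : (0:ℝ) < 2*x)
        rw [Real.exp_zero] at h
        exact mul_pos (Real.exp_pos x) (by linarith)
      rw [le_div_iff₀ hdpos, one_mul]
      have ha : (1:ℝ) ≤ Real.exp x := Real.one_le_exp hx0.le
      have hab : Real.exp x * Real.exp x = Real.exp (2*x) := by
        rw [← Real.exp_add]; ring_nf
      nlinarith [Real.exp_pos x, Real.exp_pos (2*x)]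
    have hmono : ∫⁻ x in Set.Ioi (1:ℝ), (1 : ENNReal)
        ≤ ∫⁻ x in Set.Ioi (1:ℝ), ENNReal.ofReal ((u₂ x)^2) := by
      apply lintegral_mono_ae
      filter_upwards [ae_restrict_mem measurableSet_Ioi] with x hx
      calc (1:ENNReal) = ENNReal.ofReal 1 := ENNReal.ofReal_one.symm
        _ ≤ ENNReal.ofReal ((u₂ x)^2) := ENNReal.ofReal_le_ofReal (key x hx)
    have hlhs : ∫⁻ _x in Set.Ioi (1:ℝ), (1 : ENNReal) = ⊤ := by
      rw [lintegral_one, Measure.restrict_apply MeasurableSet.univ, Set.univ_inter,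
        Real.volume_Ioi]
    exact top_le_iff.mp (hlhs ▸ hmono)
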